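/- Let G be a graph containing no subdivision of K_4 minus an edge. Then every two distinct cycles of G are edge-disjoint. -/

import Mathlib

/-- `G` is a cactus forest: any two cycles sharing an edge have the same edge set,
i.e. every two distinct cycles are edge-disjoint. -/
def IsCactusForest {V : Type*} (G : SimpleGraph V) : Prop :=
  ∀ (u v : V) (c₁ : G.Walk u u) (c₂ : G.Walk v v), c₁.IsCycle → c₂.IsCycle →
    (∃ e, e ∈ c₁.edges ∧ e ∈ c₂.edges) → {e | e ∈ c₁.edges} = {e | e ∈ c₂.edges}

/-- `G` contains a subdivision of `K₄` minus an edge: four distinct branch vertices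
`a, b, c, d` and internally disjoint paths realizing the five edges
`ab, ac, ad, bc, bd`. -/
def HasK4MinusESubdivision {V : Type*} (G : SimpleGraph V) : Prop :=
  ∃ (a b c d : V), a ≠ b ∧ a ≠ c ∧ a ≠ d ∧ b ≠ c ∧ b ≠ d ∧ c ≠ d ∧
  ∃ (p₁ : G.Walk a b) (p₂ : G.Walk a c) (p₃ : G.Walk a d)
    (p₄ : G.Walk b c) (p₅ : G.Walk b d),
    p₁.IsPath ∧ p₂.IsPath ∧ p₃.IsPath ∧ p₄.IsPath ∧ p₅.IsPath ∧
    ∀ L ∈ [(p₁.support, ({a, b} : Set V)), (p₂.support, {a, c}), (p₃.support, {a, d}),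
           (p₄.support, {b, c}), (p₅.support, {b, d})],
    ∀ M ∈ [(p₁.support, ({a, b} : Set V)), (p₂.support, {a, c}), (p₃.support, {a, d}),
           (p₄.support, {b, c}), (p₅.support, {b, d})],
      L ≠ M → ∀ x, x ∈ L.1 → x ∈ M.1 → x ∈ L.2 ∧ x ∈ M.2

/-!
Suppose two cycles `C₁, C₂` share an edge `xy` while `C₂` has an edge `f` not on `C₁`. One of the
two `x`-`y` paths into which `x, y` cut `C₂` contains `f`; its segment around `f` between two
consecutive visits to `C₁` is an ear `P` of `C₁`: a path between distinct vertices `a, b` of `C₁`,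
otherwise disjoint from `C₁`, and not an edge of `C₁`. Then `P` and the two `a`-`b` arcs of `C₁`
form a theta graph in which at least two of the three paths have an interior vertex, say `c` and
`d`, and `a, b, c, d` are the branch vertices of a subdivision of `K₄ − e` (the missing edge is
`cd`).
-/

/-- Pairs `(support of a branch path, its ends)`, as they appear in `HasK4MinusESubdivision`. -/
def MeetsOnlyAtEnds {V : Type*} (L M : List V × Set V) : Prop :=
  ∀ x, x ∈ L.1 → x ∈ M.1 → x ∈ L.2 ∧ x ∈ M.2

instance {V : Type*} : Std.Symm (MeetsOnlyAtEnds (V := V)) :=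
  ⟨fun _ _ h x hM hL => (h x hL hM).symm⟩

namespace SimpleGraph

variable {V : Type*} {G : SimpleGraph V}

namespace Walk

def InternallyDisjoint {u v : V} (p q : G.Walk u v) : Prop :=
  ∀ x ∈ p.support, x ∈ q.support → x = u ∨ x = v

lemma InternallyDisjoint.symm {u v : V} {p q : G.Walk u v} (h : p.InternallyDisjoint q) :
    q.InternallyDisjoint p :=
  fun x hq hp => h x hp hq

lemma InternallyDisjoint.meetsOnlyAtEnds {a b : V} {R S : G.Walk a b}
    (h : R.InternallyDisjoint S) {X Y : List V} {E F : Set V}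
    (hX : ∀ x ∈ X, x ∈ R.support ∧ (x = a ∨ x = b → x ∈ E))
    (hY : ∀ y ∈ Y, y ∈ S.support ∧ (y = a ∨ y = b → y ∈ F)) :
    MeetsOnlyAtEnds (X, E) (Y, F) := fun x hxX hxY =>
  have hx := h x (hX x hxX).1 (hY x hxY).1
  ⟨(hX x hxX).2 hx, (hY x hxY).2 hx⟩

lemma two_le_length_of_notMem_edges {u v : V} (huv : u ≠ v) {p : G.Walk u v}
    (h : s(u, v) ∉ p.edges) : 2 ≤ p.length := by
  match p with
  | nil => exact absurd rfl huv
  | cons _ nil => simp at h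
  | cons _ (cons _ _) => simp

lemma IsCycle.internallyDisjoint_of_append {u v : V} {p : G.Walk u v} {q : G.Walk v u}
    (h : (p.append q).IsCycle) : p.InternallyDisjoint q.reverse := by
  intro x hp hq
  have hnd := h.support_nodup
  rw [tail_support_append, List.nodup_append] at hnd
  rw [← cons_tail_support, List.mem_cons] at hp
  rw [support_reverse, List.mem_reverse, ← cons_tail_support, List.mem_cons] at hq
  rcases hp with rfl | hp
  · exact .inl rfl
  rcases hq with rfl | hq
  · exact .inr rfl
  exact absurd rfl (hnd.2.2 x hp x hq)

lemma IsCycle.exists_internallyDisjoint_paths {w : V} {c : G.Walk w w} (hc : c.IsCycle)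
    {u v : V} (hu : u ∈ c.support) (hv : v ∈ c.support) (huv : u ≠ v) :
    ∃ p q : G.Walk u v, p.IsPath ∧ q.IsPath ∧ p.InternallyDisjoint q ∧
      p.length + q.length = c.length ∧
      (∀ x, x ∈ c.support ↔ x ∈ p.support ∨ x ∈ q.support) ∧
      ∀ e, e ∈ c.edges ↔ e ∈ p.edges ∨ e ∈ q.edges := by
  classical
  obtain ⟨p, q, hpq⟩ : ∃ (p : G.Walk u v) (q : G.Walk v u), p.append q = c.rotate u hu :=
    ⟨_, _, take_spec _ ((c.mem_support_rotate_iff u hu).mpr hv)⟩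
  have hc' : (p.append q).IsCycle := hpq ▸ hc.rotate hu
  refine ⟨p, q.reverse, hc'.isPath_of_append_left (not_nil_of_ne huv.symm),
    (hc'.isPath_of_append_right (not_nil_of_ne huv)).reverse,
    hc'.internallyDisjoint_of_append, ?_, fun x => ?_, fun e => ?_⟩
  · rw [length_reverse, ← length_append, hpq, length_rotate]
  · rw [← c.mem_support_rotate_iff u hu, ← hpq, mem_support_append_iff, support_reverse,
      List.mem_reverse]
  · rw [← (c.rotate_edges u hu).mem_iff, ← hpq, edges_append, List.mem_append, edges_reverse,
      List.mem_reverse]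

lemma exists_eq_append_first_mem (S : Set V) {u v : V} (W : G.Walk u v) (hv : v ∈ S) :
    ∃ w ∈ S, ∃ (W₁ : G.Walk u w) (W₂ : G.Walk w v),
      W = W₁.append W₂ ∧ ∀ x ∈ W₁.support, x ∈ S → x = w := by
  induction W with
  | nil => exact ⟨_, hv, nil, nil, rfl, by simp⟩
  | @cons u _ _ h W ih =>
    by_cases hu : u ∈ S
    · exact ⟨u, hu, nil, cons h W, rfl, by simp⟩
    obtain ⟨w, hw, W₁, W₂, rfl, hW₁⟩ := ih hv
    refine ⟨w, hw, cons h W₁, W₂, rfl, fun x hx hxS => ?_⟩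
    rw [support_cons, List.mem_cons] at hx
    rcases hx with rfl | hx
    · exact absurd hxS hu
    · exact hW₁ x hx hxS

lemma IsPath.exists_ear (S : Set V) {u v : V} {W : G.Walk u v} (hW : W.IsPath) (hu : u ∈ S)
    (hv : v ∈ S) {f : Sym2 V} (hf : f ∈ W.edges) :
    ∃ a ∈ S, ∃ b ∈ S, a ≠ b ∧ ∃ P : G.Walk a b, P.IsPath ∧ f ∈ P.edges ∧
      ∀ x ∈ P.support, x ∈ S → x = a ∨ x = b := by
  induction hn : W.length using Nat.strong_induction_on generalizing u W with
  | _ n ih =>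
    cases W with
    | nil => simp at hf
    | cons h W' =>
      -- `cons h A` runs from `u` to the next visit `b` of `S`; if `f` is not on it, recurse on `B`.
      obtain ⟨b, hb, A, B, rfl, hA⟩ := exists_eq_append_first_mem S W' hv
      rw [← cons_append] at hW hf hn
      have hP : (cons h A).IsPath := hW.of_append_left
      by_cases hfP : f ∈ (cons h A).edges
      · refine ⟨u, hu, b, hb, ?_, cons h A, hP, hfP, fun x hx hxS => ?_⟩
        · rintro rfl
          exact not_nil_cons (hP.nil_iff_eq.mpr rfl)
        · rw [support_cons, List.mem_cons] at hx
          exact hx.imp id (hA x · hxS)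
      · rw [edges_append, List.mem_append] at hf
        refine ih B.length ?_ hW.of_append_right hb (hf.resolve_left hfP) rfl
        rw [← hn, length_append, length_cons]
        omega

lemma IsPath.exists_split_of_two_le_length {a b : V} {R : G.Walk a b} (hR : R.IsPath)
    (hl : 2 ≤ R.length) :
    ∃ c, c ≠ a ∧ c ≠ b ∧ ∃ (T : G.Walk a c) (D : G.Walk b c), T.IsPath ∧ D.IsPath ∧
      (∀ x ∈ T.support, x ∈ R.support ∧ (x = a ∨ x = b → x ∈ ({a, c} : Set V))) ∧
      (∀ x ∈ D.support, x ∈ R.support ∧ (x = a ∨ x = b → x ∈ ({b, c} : Set V))) ∧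
      MeetsOnlyAtEnds (T.support, {a, c}) (D.support, {b, c}) := by
  classical
  set c := R.getVert 1
  have hca : c ≠ a := fun h => by
    have := (hR.getVert_eq_start_iff (by omega)).mp h
    omega
  have hcb : c ≠ b := fun h => by
    have := (hR.getVert_eq_end_iff (by omega)).mp h
    omega
  have hc : c ∈ R.support := R.getVert_mem_support 1
  clear_value c
  obtain ⟨T, D, rfl⟩ : ∃ (T : G.Walk a c) (D : G.Walk c b), T.append D = R :=
    ⟨_, _, R.take_spec hc⟩
  have hnd := hR.support_nodup
  rw [support_append, List.nodup_append] at hnd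
  have hmeet : ∀ x ∈ T.support, x ∈ D.support → x = c := fun x hT hD => by
    rw [← cons_tail_support, List.mem_cons] at hD
    exact hD.resolve_right fun h => hnd.2.2 x hT x h rfl
  have hbT : b ∉ T.support := fun h => hnd.2.2 b h b (end_mem_tail_support_of_ne hcb D) rfl
  have haD : a ∉ D.support := fun h => hca (hmeet a T.start_mem_support h).symm
  refine ⟨c, hca, hcb, T, D.reverse, hR.of_append_left, hR.of_append_right.reverse,
    fun x hx => ⟨(mem_support_append_iff T D).mpr (.inl hx), ?_⟩,
    fun x hx => ?_, fun x hT hD => ?_⟩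
  · rintro (rfl | rfl)
    · simp
    · exact absurd hx hbT
  · rw [support_reverse, List.mem_reverse] at hx
    refine ⟨(mem_support_append_iff T D).mpr (.inr hx), ?_⟩
    rintro (rfl | rfl)
    · exact absurd hx haD
    · simp
  · rw [support_reverse, List.mem_reverse] at hD
    obtain rfl := hmeet x hT hD
    simp

end Walk

open Walk

lemma hasK4MinusESubdivision_of_pairwise {a b c d : V} (hab : a ≠ b) (hac : a ≠ c) (had : a ≠ d)
    (hbc : b ≠ c) (hbd : b ≠ d) (hcd : c ≠ d)
    {p₁ : G.Walk a b} {p₂ : G.Walk a c} {p₃ : G.Walk a d} {p₄ : G.Walk b c} {p₅ : G.Walk b d}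
    (h₁ : p₁.IsPath) (h₂ : p₂.IsPath) (h₃ : p₃.IsPath) (h₄ : p₄.IsPath) (h₅ : p₅.IsPath)
    (h : [(p₁.support, ({a, b} : Set V)), (p₂.support, {a, c}), (p₃.support, {a, d}),
      (p₄.support, {b, c}), (p₅.support, {b, d})].Pairwise MeetsOnlyAtEnds) :
    HasK4MinusESubdivision G :=
  ⟨a, b, c, d, hab, hac, had, hbc, hbd, hcd, p₁, p₂, p₃, p₄, p₅, h₁, h₂, h₃, h₄, h₅, h.forall⟩

lemma hasK4MinusESubdivision_of_theta {a b : V} {R₀ R₁ R₂ : G.Walk a b}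
    (h₀ : R₀.IsPath) (h₁ : R₁.IsPath) (h₂ : R₂.IsPath) (h₀₁ : R₀.InternallyDisjoint R₁)
    (h₀₂ : R₀.InternallyDisjoint R₂) (h₁₂ : R₁.InternallyDisjoint R₂)
    (hl₁ : 2 ≤ R₁.length) (hl₂ : 2 ≤ R₂.length) : HasK4MinusESubdivision G := by
  obtain ⟨c, hca, hcb, T₁, D₁, hT₁, hD₁, hT₁R, hD₁R, hTD₁⟩ := h₁.exists_split_of_two_le_length hl₁
  obtain ⟨d, hda, hdb, T₂, D₂, hT₂, hD₂, hT₂R, hD₂R, hTD₂⟩ := h₂.exists_split_of_two_le_length hl₂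
  have hR₀ : ∀ x ∈ R₀.support, x ∈ R₀.support ∧ (x = a ∨ x = b → x ∈ ({a, b} : Set V)) :=
    fun x hx => ⟨hx, id⟩
  have hab : a ≠ b := by
    rintro rfl
    rw [(isPath_iff_nil.mp h₁).length_eq_zero] at hl₁
    omega
  have hcd : c ≠ d := by
    rintro rfl
    rcases h₁₂ c (hT₁R c T₁.end_mem_support).1 (hT₂R c T₂.end_mem_support).1 with h | h
    exacts [hca h, hcb h]
  refine hasK4MinusESubdivision_of_pairwise hab hca.symm hda.symm hcb.symm hdb.symm hcd
    h₀ hT₁ hT₂ hD₁ hD₂ ?_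
  simp only [List.pairwise_cons, List.mem_cons, forall_eq_or_imp, List.not_mem_nil,
    IsEmpty.forall_iff, implies_true, and_true, List.Pairwise.nil]
  exact ⟨⟨h₀₁.meetsOnlyAtEnds hR₀ hT₁R, h₀₂.meetsOnlyAtEnds hR₀ hT₂R,
      h₀₁.meetsOnlyAtEnds hR₀ hD₁R, h₀₂.meetsOnlyAtEnds hR₀ hD₂R⟩,
    ⟨h₁₂.meetsOnlyAtEnds hT₁R hT₂R, hTD₁, h₁₂.meetsOnlyAtEnds hT₁R hD₂R⟩,
    ⟨h₁₂.symm.meetsOnlyAtEnds hT₂R hD₁R, hTD₂⟩, h₁₂.meetsOnlyAtEnds hD₁R hD₂R⟩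

lemma Walk.IsCycle.hasK4MinusESubdivision_of_ear {w : V} {c : G.Walk w w} (hc : c.IsCycle)
    {a b : V} (ha : a ∈ c.support) (hb : b ∈ c.support) (hab : a ≠ b)
    {P : G.Walk a b} (hP : P.IsPath) (hPc : ∀ x ∈ P.support, x ∈ c.support → x = a ∨ x = b)
    {f : Sym2 V} (hfP : f ∈ P.edges) (hfc : f ∉ c.edges) : HasK4MinusESubdivision G := by
  obtain ⟨Q₁, Q₂, hQ₁, hQ₂, h₁₂, hlen, hsupp, hedges⟩ :=
    hc.exists_internallyDisjoint_paths ha hb hab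
  have hP₁ : P.InternallyDisjoint Q₁ := fun x hx hx₁ => hPc x hx ((hsupp x).mpr (.inl hx₁))
  have hP₂ : P.InternallyDisjoint Q₂ := fun x hx hx₂ => hPc x hx ((hsupp x).mpr (.inr hx₂))
  by_cases hPab : s(a, b) ∈ P.edges
  · have hf : f = s(a, b) := by
      rw [hP.eq_adj_toWalk_of_mem_edges hPab] at hfP
      simpa using hfP
    subst hf
    exact hasK4MinusESubdivision_of_theta hP hQ₁ hQ₂ hP₁ hP₂ h₁₂
      (two_le_length_of_notMem_edges hab fun h => hfc ((hedges _).mpr (.inl h)))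
      (two_le_length_of_notMem_edges hab fun h => hfc ((hedges _).mpr (.inr h)))
  have hlP := two_le_length_of_notMem_edges hab hPab
  have hc₃ := hc.three_le_length
  rcases le_or_gt 2 Q₁.length with hl₁ | hl₁
  · exact hasK4MinusESubdivision_of_theta hQ₂ hP hQ₁ hP₂.symm h₁₂.symm hP₁ hlP hl₁
  · exact hasK4MinusESubdivision_of_theta hQ₁ hP hQ₂ hP₁.symm h₁₂ hP₂ hlP (by omega)

lemma Walk.IsCycle.hasK4MinusESubdivision_of_mem_edges {u v : V} {c₁ : G.Walk u u}
    {c₂ : G.Walk v v} (h₁ : c₁.IsCycle) (h₂ : c₂.IsCycle) {e f : Sym2 V} (he₁ : e ∈ c₁.edges)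
    (he₂ : e ∈ c₂.edges) (hf₂ : f ∈ c₂.edges) (hf₁ : f ∉ c₁.edges) :
    HasK4MinusESubdivision G := by
  obtain ⟨x, y⟩ := e
  obtain ⟨Q₁, Q₂, hQ₁, hQ₂, -, -, -, hedges⟩ := h₂.exists_internallyDisjoint_paths
    (c₂.fst_mem_support_of_mem_edges he₂) (c₂.snd_mem_support_of_mem_edges he₂)
    (c₁.adj_of_mem_edges he₁).ne
  obtain ⟨Q, hQ, hfQ⟩ : ∃ Q : G.Walk x y, Q.IsPath ∧ f ∈ Q.edges :=
    ((hedges f).mp hf₂).elim (⟨Q₁, hQ₁, ·⟩) (⟨Q₂, hQ₂, ·⟩)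
  obtain ⟨a, ha, b, hb, hab, P, hP, hfP, hPc⟩ := hQ.exists_ear {x | x ∈ c₁.support}
    (c₁.fst_mem_support_of_mem_edges he₁) (c₁.snd_mem_support_of_mem_edges he₁) hfQ
  exact h₁.hasK4MinusESubdivision_of_ear ha hb hab hP hPc hfP hf₁

end SimpleGraph

/-- A graph with no subdivision of `K₄` minus an edge is a cactus forest:
every two distinct cycles are edge-disjoint. -/
theorem no_K4MinusE_subdivision_cactusForest {V : Type*} (G : SimpleGraph V)
    (hG : ¬ HasK4MinusESubdivision G) : IsCactusForest G := by
  intro u v c₁ c₂ h₁ h₂ ⟨e, he₁, he₂⟩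
  ext f
  constructor <;> intro hf <;> by_contra hf' <;> apply hG
  · exact h₂.hasK4MinusESubdivision_of_mem_edges h₁ he₂ he₁ hf hf'
  · exact h₁.hasK4MinusESubdivision_of_mem_edges h₂ he₁ he₂ hf hf'
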